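/- For every integer d ≥ 3 and every integer 0 ≤ i ≤ d-2 there is a constant c > 0 such that for every pair of positive integers m, n with n^{1/2} ≤ m ≤ n^2, there exist a set S_i of m distinct i-flats in R^d and a set S_{i+1} of n distinct (i+1)-flats in R^d such that the number of containment pairs (f, g) ∈ S_i × S_{i+1} with f ⊆ g is at least c · m^{2/3} n^{2/3}. -/

import Mathlib

open scoped Classical
noncomputable section

/-- An `i`-flat in `ℝ^d`: a nonempty affine subspace of dimension `i`. -/
def IsFlat (d i : ℕ) (f : AffineSubspace ℝ (Fin d → ℝ)) : Prop :=
  (f : Set (Fin d → ℝ)).Nonempty ∧ Module.finrank ℝ f.direction = i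

/-!
Elekes' grid: the points `[r] × [2rs]` and the lines `y = a x + b` with `a < s`, `b < rs`.
Every line passes through the `r` grid points with `x < r`, so `2r²s` points and `rs²` lines
span `r²s²` incidences; with `r ≈ m^{2/3} n^{-1/3}` and `s ≈ n^{2/3} m^{-1/3}` this is of order
`m^{2/3} n^{2/3}` (when `n² < 8m`, putting all `m` points on one line is already enough).
The preimages of points and lines under the projection `ℝ^i × ℝ² → ℝ²` are `i`-flats and
`(i+1)`-flats with the same incidences, and `ℝ^i × ℝ²` embeds linearly into `ℝ^d`.
-/

open Finset Module Function

section General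

variable {k V W P₁ P₂ : Type*} [Ring k] [AddCommGroup V] [Module k V] [AddCommGroup W]
  [Module k W]

theorem AffineSubspace.mem_mk'_ker_iff {φ : V →ₗ[k] W} {x₀ x : V} :
    x ∈ AffineSubspace.mk' x₀ (LinearMap.ker φ) ↔ φ x = φ x₀ := by
  rw [AffineSubspace.mem_mk', vsub_eq_sub, LinearMap.mem_ker, map_sub, sub_eq_zero]

variable [AddTorsor V P₁] [AddTorsor W P₂] {f : P₁ →ᵃ[k] P₂}

theorem AffineSubspace.map_le_map_iff_of_injective (hf : Injective f)
    {s t : AffineSubspace k P₁} : s.map f ≤ t.map f ↔ s ≤ t := by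
  rw [← SetLike.coe_subset_coe, AffineSubspace.coe_map, AffineSubspace.coe_map,
    Set.image_subset_image_iff hf, SetLike.coe_subset_coe]

theorem AffineSubspace.map_injective_of_injective (hf : Injective f) :
    Injective (AffineSubspace.map f) := fun _ _ h =>
  le_antisymm ((map_le_map_iff_of_injective hf).1 h.le) ((map_le_map_iff_of_injective hf).1 h.ge)

end General

theorem LinearMap.finrank_ker_add_of_surjective {k V W : Type*} [DivisionRing k]
    [AddCommGroup V] [Module k V] [AddCommGroup W] [Module k W] [FiniteDimensional k V]
    {φ : V →ₗ[k] W} (hφ : Surjective φ) :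
    finrank k (LinearMap.ker φ) + finrank k W = finrank k V := by
  rw [← LinearMap.finrank_range_add_finrank_ker φ, LinearMap.range_eq_top.2 hφ, finrank_top,
    add_comm]

namespace LiftedElekes

/-- A line is encoded by its slope and intercept: `ℓ` stands for `y = ℓ.1 * x + ℓ.2`. -/
def planarIncidences (P L : Finset (ℕ × ℕ)) : Finset ((ℕ × ℕ) × (ℕ × ℕ)) :=
  {q ∈ P ×ˢ L | q.1.2 = q.2.1 * q.1.1 + q.2.2}

lemma planarIncidences_mono {P P' L L' : Finset (ℕ × ℕ)} (hP : P ⊆ P') (hL : L ⊆ L') :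
    planarIncidences P L ⊆ planarIncidences P' L' :=
  filter_subset_filter _ (product_subset_product hP hL)

lemma exists_card_eq_le_card_planarIncidences (P₀ L₀ : Finset (ℕ × ℕ)) {m n : ℕ} (hm : #P₀ ≤ m)
    (hn : #L₀ ≤ n) : ∃ P L : Finset (ℕ × ℕ), #P = m ∧ #L = n ∧
      #(planarIncidences P₀ L₀) ≤ #(planarIncidences P L) := by
  obtain ⟨P, hP, rfl⟩ := Infinite.exists_superset_card_eq P₀ m hm
  obtain ⟨L, hL, rfl⟩ := Infinite.exists_superset_card_eq L₀ n hn
  exact ⟨P, L, rfl, rfl, card_le_card (planarIncidences_mono hP hL)⟩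

def gridPoints (r s : ℕ) : Finset (ℕ × ℕ) := range r ×ˢ range (2 * r * s)

def gridLines (r s : ℕ) : Finset (ℕ × ℕ) := range s ×ˢ range (r * s)

lemma card_gridPoints (r s : ℕ) : #(gridPoints r s) = 2 * r ^ 2 * s := by
  simp only [gridPoints, card_product, card_range]; ring

lemma card_gridLines (r s : ℕ) : #(gridLines r s) = r * s ^ 2 := by
  simp only [gridLines, card_product, card_range]; ring

lemma le_card_planarIncidences_grid (r s : ℕ) :
    r ^ 2 * s ^ 2 ≤ #(planarIncidences (gridPoints r s) (gridLines r s)) := by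
  calc r ^ 2 * s ^ 2 = #(range r ×ˢ gridLines r s) := by
        simp only [gridLines, card_product, card_range]; ring
    _ ≤ _ := by
      refine card_le_card_of_injOn (fun q => ((q.1, q.2.1 * q.1 + q.2.2), q.2)) ?_ ?_
      · rintro ⟨x, a, b⟩ hq
        simp only [gridLines, coe_product, coe_range, Set.mem_prod, Set.mem_Iio] at hq
        obtain ⟨hx, ha, hb⟩ := hq
        have hax : a * x < s * r := mul_lt_mul'' ha hx a.zero_le x.zero_le
        simp only [planarIncidences, gridPoints, gridLines, coe_filter, mem_product, mem_range,
          Set.mem_ofPred_eq]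
        refine ⟨⟨⟨hx, ?_⟩, ha, hb⟩, trivial⟩
        linarith
      · rintro ⟨x, ℓ⟩ - ⟨x', ℓ'⟩ - h
        simp only [Prod.mk.injEq] at h
        rw [h.1.1, h.2]

lemma le_card_planarIncidences_collinear (m : ℕ) :
    m ≤ #(planarIncidences (range m ×ˢ {0}) {(0, 0)}) := by
  calc m = #(range m) := (card_range m).symm
    _ ≤ _ := by
      refine card_le_card_of_injOn (fun x => ((x, 0), (0, 0))) ?_ ?_
      · intro x hx
        simpa [planarIncidences] using hx
      · intro x _ x' _ h
        simpa using h

lemma exists_nat_le_le_two_mul {x : ℝ} (hx : 1 ≤ x) : ∃ r : ℕ, (r : ℝ) ≤ x ∧ x ≤ 2 * r := by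
  have h1 : (1 : ℝ) ≤ ⌊x⌋₊ := by exact_mod_cast Nat.le_floor (by exact_mod_cast hx)
  exact ⟨⌊x⌋₊, Nat.floor_le (by linarith), by linarith [Nat.lt_floor_add_one x]⟩

/-- The choice `r ≈ a² / b`, `s ≈ b² / (2a)` of the grid size for `m = a³` points and
`n = b³` lines. -/
lemma exists_grid_size {a b : ℝ} (ha : 0 < a) (hb : 0 < b) (hba : b ≤ a ^ 2)
    (hab : 2 * a ≤ b ^ 2) : ∃ r s : ℕ, 2 * (r : ℝ) ^ 2 * s ≤ a ^ 3 ∧ (r : ℝ) * s ^ 2 ≤ b ^ 3 ∧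
      a ^ 2 * b ^ 2 ≤ 64 * ((r : ℝ) ^ 2 * s ^ 2) := by
  obtain ⟨r, hrx, hxr⟩ := exists_nat_le_le_two_mul (x := a ^ 2 / b)
    (by rwa [le_div_iff₀ hb, one_mul])
  obtain ⟨s, hsy, hys⟩ := exists_nat_le_le_two_mul (x := b ^ 2 / (2 * a))
    (by rwa [le_div_iff₀ (by positivity), one_mul])
  refine ⟨r, s, ?_, ?_, ?_⟩
  · calc 2 * (r : ℝ) ^ 2 * s ≤ 2 * (a ^ 2 / b) ^ 2 * (b ^ 2 / (2 * a)) := by gcongr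
      _ = a ^ 3 := by field_simp
  · calc (r : ℝ) * s ^ 2 ≤ a ^ 2 / b * (b ^ 2 / (2 * a)) ^ 2 := by gcongr
      _ = b ^ 3 / 4 := by field_simp; ring
      _ ≤ b ^ 3 := by linarith [pow_pos hb 3]
  · calc a ^ 2 * b ^ 2 = 4 * ((a ^ 2 / b) ^ 2 * (b ^ 2 / (2 * a)) ^ 2) := by field_simp; ring
      _ ≤ 4 * ((2 * (r : ℝ)) ^ 2 * (2 * (s : ℝ)) ^ 2) := by gcongr
      _ = 64 * ((r : ℝ) ^ 2 * s ^ 2) := by ring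

lemma rpow_two_thirds {x : ℝ} (hx : 0 ≤ x) : x ^ ((2 : ℝ) / 3) = (x ^ ((3 : ℝ)⁻¹)) ^ 2 := by
  rw [← Real.rpow_natCast, ← Real.rpow_mul hx]; norm_num

lemma rpow_inv_three_pow_three {x : ℝ} (hx : 0 ≤ x) : (x ^ ((3 : ℝ)⁻¹)) ^ 3 = x := by
  simpa using Real.rpow_inv_natCast_pow (n := 3) hx (by norm_num)

theorem exists_planar_lower_bound {m n : ℕ} (hm : 0 < m) (hn : 0 < n) (hnm : √(n : ℝ) ≤ m) :
    ∃ P L : Finset (ℕ × ℕ), #P = m ∧ #L = n ∧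
      (m : ℝ) ^ ((2 : ℝ) / 3) * (n : ℝ) ^ ((2 : ℝ) / 3) ≤ 64 * #(planarIncidences P L) := by
  set a := (m : ℝ) ^ ((3 : ℝ)⁻¹)
  set b := (n : ℝ) ^ ((3 : ℝ)⁻¹)
  have ha : 0 < a := by positivity
  have hb : 0 < b := by positivity
  have ha3 : a ^ 3 = m := rpow_inv_three_pow_three m.cast_nonneg
  have hb3 : b ^ 3 = n := rpow_inv_three_pow_three n.cast_nonneg
  rw [rpow_two_thirds m.cast_nonneg, rpow_two_thirds n.cast_nonneg]
  have hba : b ≤ a ^ 2 := by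
    have hnm2 : (n : ℝ) ≤ (m : ℝ) ^ 2 := by
      simpa [Real.sq_sqrt n.cast_nonneg] using pow_le_pow_left₀ (Real.sqrt_nonneg _) hnm 2
    refine (pow_le_pow_iff_left₀ hb.le (by positivity) three_ne_zero).1 ?_
    rw [hb3, ← pow_mul, mul_comm, pow_mul, ha3]
    exact hnm2
  by_cases hab : 2 * a ≤ b ^ 2
  · obtain ⟨r, s, hrm, hsn, hrs⟩ := exists_grid_size ha hb hba hab
    have hPm : #(gridPoints r s) ≤ m := by rw [card_gridPoints]; exact_mod_cast ha3 ▸ hrm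
    have hLn : #(gridLines r s) ≤ n := by rw [card_gridLines]; exact_mod_cast hb3 ▸ hsn
    obtain ⟨P, L, hP, hL, hPL⟩ := exists_card_eq_le_card_planarIncidences _ _ hPm hLn
    refine ⟨P, L, hP, hL, hrs.trans ?_⟩
    gcongr
    exact_mod_cast (le_card_planarIncidences_grid r s).trans hPL
  · have hPm : #(range m ×ˢ {0}) ≤ m := by simp
    have hLn : #({(0, 0)} : Finset (ℕ × ℕ)) ≤ n := by rw [card_singleton]; exact hn
    obtain ⟨P, L, hP, hL, hPL⟩ := exists_card_eq_le_card_planarIncidences _ _ hPm hLn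
    refine ⟨P, L, hP, hL, ?_⟩
    have hm_le : (m : ℝ) ≤ #(planarIncidences P L) := by
      exact_mod_cast (le_card_planarIncidences_collinear m).trans hPL
    calc a ^ 2 * b ^ 2 ≤ a ^ 2 * (2 * a) := by gcongr; linarith
      _ = 2 * (m : ℝ) := by rw [← ha3]; ring
      _ ≤ 64 * (#(planarIncidences P L) : ℝ) := by linarith

section Lift

variable {k K : Type*} [Field k] [AddCommGroup K] [Module k K]

def lineForm (s : k) : k × k →ₗ[k] k := LinearMap.snd k k k - s • LinearMap.fst k k k

/- The cylinders `K × {p}` over a point `p` and `K × ℓ` over the line `ℓ : y = ℓ.1 * x + ℓ.2`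
of the plane `k × k`. -/
def pointLift (p : k × k) : AffineSubspace k (K × (k × k)) :=
  AffineSubspace.mk' (0, p) (LinearMap.ker (LinearMap.snd k K (k × k)))

def lineLift (ℓ : k × k) : AffineSubspace k (K × (k × k)) :=
  AffineSubspace.mk' (0, (0, ℓ.2)) (LinearMap.ker ((lineForm ℓ.1).comp (LinearMap.snd k K (k × k))))

lemma mem_pointLift {p : k × k} {x : K × (k × k)} : x ∈ pointLift p ↔ x.2 = p := by
  rw [pointLift, AffineSubspace.mem_mk'_ker_iff, LinearMap.snd_apply, LinearMap.snd_apply]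

lemma mem_lineLift {ℓ : k × k} {x : K × (k × k)} : x ∈ lineLift ℓ ↔ x.2.2 = ℓ.1 * x.2.1 + ℓ.2 := by
  rw [lineLift, AffineSubspace.mem_mk'_ker_iff]
  simp [lineForm, sub_eq_iff_eq_add']

lemma pointLift_le_lineLift_iff {p ℓ : k × k} :
    (pointLift p : AffineSubspace k (K × (k × k))) ≤ lineLift ℓ ↔ p.2 = ℓ.1 * p.1 + ℓ.2 := by
  refine ⟨fun h => mem_lineLift.1 (h (mem_pointLift.2 rfl : ((0 : K), p) ∈ pointLift p)), ?_⟩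
  intro h x hx
  rw [mem_pointLift] at hx
  rw [mem_lineLift, hx, h]

lemma pointLift_injective : Injective (pointLift : k × k → AffineSubspace k (K × (k × k))) := by
  intro p q h
  have hp : ((0 : K), p) ∈ pointLift q := h ▸ mem_pointLift.2 rfl
  exact mem_pointLift.1 hp

lemma lineLift_injective : Injective (lineLift : k × k → AffineSubspace k (K × (k × k))) := by
  intro ℓ ℓ' h
  have h₀ : ((0 : K), ((0 : k), ℓ.2)) ∈ lineLift ℓ' := h ▸ mem_lineLift.2 (by simp)
  have h₁ : ((0 : K), ((1 : k), ℓ.1 + ℓ.2)) ∈ lineLift ℓ' := h ▸ mem_lineLift.2 (by simp)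
  rw [mem_lineLift] at h₀ h₁
  simp only [mul_zero, zero_add, mul_one] at h₀ h₁
  exact Prod.ext (by linear_combination h₁ - h₀) h₀

variable [FiniteDimensional k K]

lemma finrank_direction_pointLift (p : k × k) :
    finrank k (pointLift p : AffineSubspace k (K × (k × k))).direction = finrank k K := by
  have := LinearMap.finrank_ker_add_of_surjective
    (LinearMap.snd_surjective (R := k) (M := K) (M₂ := k × k))
  rw [pointLift, AffineSubspace.direction_mk']
  simp only [finrank_prod, finrank_self] at this
  omega

lemma finrank_direction_lineLift (ℓ : k × k) :
    finrank k (lineLift ℓ : AffineSubspace k (K × (k × k))).direction = finrank k K + 1 := by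
  have hφ : Surjective ((lineForm ℓ.1).comp (LinearMap.snd k K (k × k))) :=
    fun c => ⟨(0, (0, c)), by simp [lineForm]⟩
  have := LinearMap.finrank_ker_add_of_surjective hφ
  rw [lineLift, AffineSubspace.direction_mk']
  simp only [finrank_prod, finrank_self] at this
  omega

end Lift

lemma ncard_le_pairs_image_eq_card_filter {α β X : Type*} [LE X] (P : Finset α) (L : Finset β)
    {Φ : α → X} {Ψ : β → X} (hΦ : Injective Φ) (hΨ : Injective Ψ) :
    {q : X × X | q.1 ∈ P.image Φ ∧ q.2 ∈ L.image Ψ ∧ q.1 ≤ q.2}.ncard =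
      #{q ∈ P ×ˢ L | Φ q.1 ≤ Ψ q.2} := by
  have : {q : X × X | q.1 ∈ P.image Φ ∧ q.2 ∈ L.image Ψ ∧ q.1 ≤ q.2} =
      Prod.map Φ Ψ '' ↑{q ∈ P ×ˢ L | Φ q.1 ≤ Ψ q.2} := by
    ext ⟨f, g⟩
    simp only [mem_image, Set.mem_ofPred_eq, coe_filter, mem_product, Set.mem_image, Prod.exists,
      Prod.map_apply, Prod.mk.injEq]
    grind
  rw [this, Set.ncard_image_of_injective _ (hΦ.prodMap hΨ), Set.ncard_coe_finset]

lemma isFlat_map {d : ℕ} {V : Type*} [AddCommGroup V] [Module ℝ V] {ι : V →ₗ[ℝ] (Fin d → ℝ)}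
    (hι : Injective ι) {S : AffineSubspace ℝ V} (hS : (S : Set V).Nonempty) :
    IsFlat d (finrank ℝ S.direction) (S.map ι.toAffineMap) := by
  refine ⟨hS.image _, ?_⟩
  rw [AffineSubspace.map_direction, LinearMap.toAffineMap_linear]
  exact (Submodule.equivMapOfInjective ι hι _).finrank_eq.symm

theorem exists_flats_ncard_eq_card_planarIncidences {d i : ℕ} (hi : i + 2 ≤ d)
    (P L : Finset (ℕ × ℕ)) :
    ∃ A B : Finset (AffineSubspace ℝ (Fin d → ℝ)),
      #A = #P ∧ #B = #L ∧ (∀ f ∈ A, IsFlat d i f) ∧ (∀ g ∈ B, IsFlat d (i + 1) g) ∧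
      Set.ncard {q : AffineSubspace ℝ (Fin d → ℝ) × AffineSubspace ℝ (Fin d → ℝ) |
        q.1 ∈ A ∧ q.2 ∈ B ∧ q.1 ≤ q.2} = #(planarIncidences P L) := by
  obtain ⟨ι, hι⟩ : ∃ ι : (Fin i → ℝ) × (ℝ × ℝ) →ₗ[ℝ] (Fin d → ℝ), Injective ι :=
    finrank_le_iff_exists_linearMap.1 (by simpa [finrank_prod] using hi)
  have hcast : Injective (Prod.map ((↑) : ℕ → ℝ) ((↑) : ℕ → ℝ)) :=
    Nat.cast_injective.prodMap Nat.cast_injective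
  have hmap := AffineSubspace.map_injective_of_injective (f := ι.toAffineMap) hι
  set Φ := fun p => (pointLift (Prod.map ((↑) : ℕ → ℝ) ((↑) : ℕ → ℝ) p)).map ι.toAffineMap
  set Ψ := fun ℓ => (lineLift (Prod.map ((↑) : ℕ → ℝ) ((↑) : ℕ → ℝ) ℓ)).map ι.toAffineMap
  have hΦ : Injective Φ := hmap.comp (pointLift_injective.comp hcast)
  have hΨ : Injective Ψ := hmap.comp (lineLift_injective.comp hcast)
  refine ⟨P.image Φ, L.image Ψ, card_image_of_injective _ hΦ, card_image_of_injective _ hΨ,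
    forall_mem_image.2 fun p _ => ?_, forall_mem_image.2 fun ℓ _ => ?_, ?_⟩
  · have := isFlat_map hι (S := pointLift (Prod.map (↑) (↑) p))
      ⟨_, AffineSubspace.self_mem_mk' _ _⟩
    rwa [finrank_direction_pointLift, finrank_fin_fun] at this
  · have := isFlat_map hι (S := lineLift (Prod.map (↑) (↑) ℓ))
      ⟨_, AffineSubspace.self_mem_mk' _ _⟩
    rwa [finrank_direction_lineLift, finrank_fin_fun] at this
  · rw [ncard_le_pairs_image_eq_card_filter P L hΦ hΨ, planarIncidences]
    congr 1
    refine filter_congr fun q _ => ?_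
    rw [AffineSubspace.map_le_map_iff_of_injective hι, pointLift_le_lineLift_iff]
    simp only [Prod.map_fst, Prod.map_snd]
    norm_cast

end LiftedElekes

theorem lifted_elekes_lower_bound_general (d i : ℕ) (hi : i + 2 ≤ d) :
    ∃ c : ℝ, 0 < c ∧
      ∀ m n : ℕ, 0 < m → 0 < n → Real.sqrt n ≤ (m : ℝ) → m ≤ n ^ 2 →
        ∃ A B : Finset (AffineSubspace ℝ (Fin d → ℝ)),
          A.card = m ∧ B.card = n ∧
          (∀ f ∈ A, IsFlat d i f) ∧ (∀ g ∈ B, IsFlat d (i + 1) g) ∧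
          c * (m : ℝ) ^ ((2:ℝ)/3) * (n : ℝ) ^ ((2:ℝ)/3) ≤
            (Set.ncard {q : AffineSubspace ℝ (Fin d → ℝ) × AffineSubspace ℝ (Fin d → ℝ) |
                q.1 ∈ A ∧ q.2 ∈ B ∧ q.1 ≤ q.2} : ℝ) := by
  refine ⟨1 / 64, by norm_num, fun m n hm hn hnm _ => ?_⟩
  obtain ⟨P, L, rfl, rfl, hPL⟩ := LiftedElekes.exists_planar_lower_bound hm hn hnm
  obtain ⟨A, B, hA, hB, hfA, hfB, hAB⟩ :=
    LiftedElekes.exists_flats_ncard_eq_card_planarIncidences hi P L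
  refine ⟨A, B, hA, hB, hfA, hfB, ?_⟩
  rw [hAB]
  linarith

/-- For every `d ≥ 3` and `0 ≤ i ≤ d-2` there is `c > 0` such that for all `m, n` with
`n^{1/2} ≤ m ≤ n^2` there are `m` distinct `i`-flats and `n` distinct `(i+1)`-flats in
`ℝ^d` with at least `c · m^{2/3} n^{2/3}` containment pairs. -/
theorem lifted_elekes_lower_bound (d i : ℕ) (hd : 3 ≤ d) (hi : i + 2 ≤ d) :
    ∃ c : ℝ, 0 < c ∧
      ∀ m n : ℕ, 0 < m → 0 < n → Real.sqrt n ≤ (m : ℝ) → m ≤ n ^ 2 →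
        ∃ A B : Finset (AffineSubspace ℝ (Fin d → ℝ)),
          A.card = m ∧ B.card = n ∧
          (∀ f ∈ A, IsFlat d i f) ∧ (∀ g ∈ B, IsFlat d (i + 1) g) ∧
          c * (m : ℝ) ^ ((2:ℝ)/3) * (n : ℝ) ^ ((2:ℝ)/3) ≤
            (Set.ncard {q : AffineSubspace ℝ (Fin d → ℝ) × AffineSubspace ℝ (Fin d → ℝ) |
                q.1 ∈ A ∧ q.2 ∈ B ∧ q.1 ≤ q.2} : ℝ) :=
  lifted_elekes_lower_bound_general d i hi
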